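/- Let I be a finite set of items with a size function s : I → ℝ such that every item has a size in (1/4, 1]. Let P and Q be packings of I into bins of capacity 1 such that every nonempty bin of P and every nonempty bin of Q has one of the types BL, BS, B, LLS, LL, LSS, SSS. Assume P is BL-thorough: for all items b of class B and l of class L with s(b) + s(l) ≤ 1, the bin of b in P is of type BL or the bin of l in P is of type BL. Then N_P(BL) + N_Q(LSS) ≥ 2 * (N_P(LLS) + N_P(LL) - N_Q(LLS) - N_Q(LL)). -/

import Mathlib

open Classical

/-- The set of items that packing `P` assigns to bin `b`. -/
noncomputable def binOf {ι β : Type*} [Fintype ι] (P : ι → β) (b : β) : Finset ι :=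
  Finset.univ.filter (fun i => P i = b)

/-- `P` is a valid packing into bins of capacity 1. -/
def IsPacking {ι β : Type*} [Fintype ι] (s : ι → ℝ) (P : ι → β) : Prop :=
  ∀ b : β, ∑ i ∈ binOf P b, s i ≤ 1

/-- A `B` (big) item has size in `(1/2, 1]`. -/
def isB {ι : Type*} (s : ι → ℝ) (i : ι) : Prop := 1 / 2 < s i ∧ s i ≤ 1

/-- An `L` (large) item has size in `(1/3, 1/2]`. -/
def isL {ι : Type*} (s : ι → ℝ) (i : ι) : Prop := 1 / 3 < s i ∧ s i ≤ 1 / 2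

/-- An `S` (small) item has size in `(1/4, 1/3]`. -/
def isS {ι : Type*} (s : ι → ℝ) (i : ι) : Prop := 1 / 4 < s i ∧ s i ≤ 1 / 3

/-- Bin `b` of packing `P` contains exactly `nb` items of class `B`, `nl` of class `L`,
`ns` of class `S` and nothing else. -/
noncomputable def BinHasType {ι β : Type*} [Fintype ι] (s : ι → ℝ) (P : ι → β) (b : β)
    (nb nl ns : ℕ) : Prop :=
  ((binOf P b).filter (fun i => isB s i)).card = nb ∧
  ((binOf P b).filter (fun i => isL s i)).card = nl ∧
  ((binOf P b).filter (fun i => isS s i)).card = ns ∧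
  (binOf P b).card = nb + nl + ns

/-- Number of bins of packing `P` containing exactly `nb` `B` items, `nl` `L` items and
`ns` `S` items (and nothing else). -/
noncomputable def numBins {ι β : Type*} [Fintype ι] [DecidableEq β] (s : ι → ℝ)
    (P : ι → β) (nb nl ns : ℕ) : ℕ :=
  ((Finset.univ.image P).filter (fun b => BinHasType s P b nb nl ns)).card


/-!
Counting the `L` items bin by bin in either packing gives
`N(BL) + 2 N(LLS) + 2 N(LL) + N(LSS)` for both `P` and `Q`, so the claim reduces to
`N_Q(BL) ≤ 2 N_P(BL)`. The two items of a `BL` bin of `Q` fit together, so by thoroughness one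
of them lies in a `BL` bin of `P`; every `Q`-`BL` bin thus meets the items of `P`-`BL` bins,
of which there are exactly `2 N_P(BL)`.
-/

open Finset

/-- The bin types `BL, BS, B, LLS, LL, LSS, SSS`. -/
def HasAllowedBinTypes {ι β : Type*} [Fintype ι] (s : ι → ℝ) (P : ι → β) : Prop :=
  ∀ b : β, (∃ i, P i = b) →
    BinHasType s P b 1 1 0 ∨ BinHasType s P b 1 0 1 ∨ BinHasType s P b 1 0 0 ∨
    BinHasType s P b 0 2 1 ∨ BinHasType s P b 0 2 0 ∨ BinHasType s P b 0 1 2 ∨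
    BinHasType s P b 0 0 3

def IsBLThorough {ι β : Type*} [Fintype ι] (s : ι → ℝ) (P : ι → β) : Prop :=
  ∀ bi li : ι, isB s bi → isL s li → s bi + s li ≤ 1 →
    BinHasType s P (P bi) 1 1 0 ∨ BinHasType s P (P li) 1 1 0

section

variable {ι β γ : Type*} [Fintype ι] {s : ι → ℝ} {P : ι → β}

@[simp]
lemma mem_binOf {b : β} {i : ι} : i ∈ binOf P b ↔ P i = b := by
  simp [binOf]

lemma card_filter_isL_binOf (hP : HasAllowedBinTypes s P) {b : β} (hb : ∃ i, P i = b) :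
    #((binOf P b).filter (isL s)) =
      (if BinHasType s P b 1 1 0 then 1 else 0) + 2 * (if BinHasType s P b 0 2 1 then 1 else 0) +
        2 * (if BinHasType s P b 0 2 0 then 1 else 0) +
        (if BinHasType s P b 0 1 2 then 1 else 0) := by
  rcases hP b hb with h | h | h | h | h | h | h <;> rw [h.2.1] <;> split_ifs <;>
    simp only [BinHasType] at * <;> omega

lemma card_filter_isL_eq [DecidableEq β] (hP : HasAllowedBinTypes s P) :
    #(univ.filter (isL s)) =
      numBins s P 1 1 0 + 2 * numBins s P 0 2 1 + 2 * numBins s P 0 2 0 + numBins s P 0 1 2 := by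
  have hfiber (b : β) :
      #{i ∈ univ.filter (isL s) | P i = b} = #((binOf P b).filter (isL s)) := by
    congr 1; ext i; simp [and_comm]
  rw [card_eq_sum_card_fiberwise (t := univ.image P) fun i _ => mem_image_of_mem P (mem_univ i),
    sum_congr rfl fun b hb =>
      (hfiber b).trans (card_filter_isL_binOf hP (by simpa using hb))]
  simp only [sum_add_distrib, ← mul_sum, ← card_filter]
  rfl

lemma card_filter_binHasType_eq [DecidableEq β] (nb nl ns : ℕ) :
    #(univ.filter fun i => BinHasType s P (P i) nb nl ns) =
      (nb + nl + ns) * numBins s P nb nl ns := by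
  set bins := (univ.image P).filter fun b => BinHasType s P b nb nl ns
  have hfiber : ∀ b ∈ bins,
      #{i ∈ univ.filter fun i => BinHasType s P (P i) nb nl ns | P i = b} = nb + nl + ns := by
    intro b hb
    have hb := (mem_filter.mp hb).2
    rw [← hb.2.2.2]
    congr 1; ext i
    simp only [mem_filter, mem_univ, true_and, mem_binOf]
    exact ⟨And.right, fun hi => ⟨hi ▸ hb, hi⟩⟩
  rw [card_eq_sum_card_fiberwise (t := bins) (f := P) fun i hi => by simpa [bins] using hi,
    sum_congr rfl hfiber, sum_const, smul_eq_mul, mul_comm]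
  rfl

lemma BinHasType.exists_binOf_eq_pair {b : β} (h : BinHasType s P b 1 1 0) :
    ∃ x y, isB s x ∧ isL s y ∧ x ≠ y ∧ binOf P b = {x, y} := by
  obtain ⟨x, hx⟩ := card_eq_one.mp h.1
  obtain ⟨y, hy⟩ := card_eq_one.mp h.2.1
  obtain ⟨hxb, hxB⟩ := mem_filter.mp (hx ▸ mem_singleton_self x)
  obtain ⟨hyb, hyL⟩ := mem_filter.mp (hy ▸ mem_singleton_self y)
  have hxy : x ≠ y := by
    rintro rfl
    linarith [hxB.1, hyL.2]
  refine ⟨x, y, hxB, hyL, hxy, (eq_of_subset_of_card_le ?_ ?_).symm⟩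
  · exact insert_subset_iff.mpr ⟨hxb, singleton_subset_iff.mpr hyb⟩
  · rw [card_pair hxy, h.2.2.2]

lemma IsBLThorough.exists_mem_binOf {Q : ι → γ} (hP : IsBLThorough s P) (hQ : IsPacking s Q)
    {c : γ} (hc : BinHasType s Q c 1 1 0) : ∃ i, Q i = c ∧ BinHasType s P (P i) 1 1 0 := by
  obtain ⟨x, y, hx, hy, hxy, hc⟩ := hc.exists_binOf_eq_pair
  have hfit : s x + s y ≤ 1 := by simpa [hc, sum_pair hxy] using hQ c
  have hxc : Q x = c := mem_binOf.mp (hc ▸ mem_insert_self x {y})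
  have hyc : Q y = c := mem_binOf.mp (hc ▸ mem_insert_of_mem (mem_singleton_self y))
  rcases hP x y hx hy hfit with h | h
  exacts [⟨x, hxc, h⟩, ⟨y, hyc, h⟩]

lemma IsBLThorough.numBins_le_two_mul [DecidableEq β] [DecidableEq γ] {Q : ι → γ}
    (hP : IsBLThorough s P) (hQ : IsPacking s Q) :
    numBins s Q 1 1 0 ≤ 2 * numBins s P 1 1 0 :=
  calc numBins s Q 1 1 0 ≤ #(univ.filter fun i => BinHasType s P (P i) 1 1 0) := by
        refine card_le_card_of_surjOn Q fun c hc => ?_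
        obtain ⟨i, hi, hiP⟩ := hP.exists_mem_binOf hQ (mem_filter.mp hc).2
        exact ⟨i, by simpa using hiP, hi⟩
    _ = 2 * numBins s P 1 1 0 := card_filter_binHasType_eq 1 1 0

end

theorem boundL_general {ι β γ : Type*} [Fintype ι] [DecidableEq β] [DecidableEq γ]
    (s : ι → ℝ)
    (P : ι → β) (Q : ι → γ)
    (hQ : IsPacking s Q)
    (hPtypes : ∀ b : β, (∃ i, P i = b) →
      BinHasType s P b 1 1 0 ∨ BinHasType s P b 1 0 1 ∨ BinHasType s P b 1 0 0 ∨
      BinHasType s P b 0 2 1 ∨ BinHasType s P b 0 2 0 ∨ BinHasType s P b 0 1 2 ∨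
      BinHasType s P b 0 0 3)
    (hQtypes : ∀ b : γ, (∃ i, Q i = b) →
      BinHasType s Q b 1 1 0 ∨ BinHasType s Q b 1 0 1 ∨ BinHasType s Q b 1 0 0 ∨
      BinHasType s Q b 0 2 1 ∨ BinHasType s Q b 0 2 0 ∨ BinHasType s Q b 0 1 2 ∨
      BinHasType s Q b 0 0 3)
    (hBLthorough : ∀ bi li : ι, isB s bi → isL s li → s bi + s li ≤ 1 →
      BinHasType s P (P bi) 1 1 0 ∨ BinHasType s P (P li) 1 1 0) :
    (numBins s P 1 1 0 : ℤ) + numBins s Q 0 1 2 ≥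
      2 * ((numBins s P 0 2 1 : ℤ) + numBins s P 0 2 0
            - numBins s Q 0 2 1 - numBins s Q 0 2 0) := by
  have hLP := card_filter_isL_eq (P := P) hPtypes
  have hLQ := card_filter_isL_eq (P := Q) hQtypes
  have hBL : numBins s Q 1 1 0 ≤ 2 * numBins s P 1 1 0 :=
    IsBLThorough.numBins_le_two_mul hBLthorough hQ
  omega

/-- Lemma 7 of the paper (`N_P(BL) + N_Q(LSS) ≥ 2 (N_P(LLS) + N_P(LL) - N_Q(LLS) - N_Q(LL))`). -/
theorem boundL {ι β γ : Type*} [Fintype ι] [DecidableEq β] [DecidableEq γ]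
    (s : ι → ℝ) (hs : ∀ i, 1 / 4 < s i ∧ s i ≤ 1)
    (P : ι → β) (Q : ι → γ)
    (hP : IsPacking s P) (hQ : IsPacking s Q)
    (hPtypes : ∀ b : β, (∃ i, P i = b) →
      BinHasType s P b 1 1 0 ∨ BinHasType s P b 1 0 1 ∨ BinHasType s P b 1 0 0 ∨
      BinHasType s P b 0 2 1 ∨ BinHasType s P b 0 2 0 ∨ BinHasType s P b 0 1 2 ∨
      BinHasType s P b 0 0 3)
    (hQtypes : ∀ b : γ, (∃ i, Q i = b) →
      BinHasType s Q b 1 1 0 ∨ BinHasType s Q b 1 0 1 ∨ BinHasType s Q b 1 0 0 ∨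
      BinHasType s Q b 0 2 1 ∨ BinHasType s Q b 0 2 0 ∨ BinHasType s Q b 0 1 2 ∨
      BinHasType s Q b 0 0 3)
    (hBLthorough : ∀ bi li : ι, isB s bi → isL s li → s bi + s li ≤ 1 →
      BinHasType s P (P bi) 1 1 0 ∨ BinHasType s P (P li) 1 1 0) :
    (numBins s P 1 1 0 : ℤ) + numBins s Q 0 1 2 ≥
      2 * ((numBins s P 0 2 1 : ℤ) + numBins s P 0 2 0
            - numBins s Q 0 2 1 - numBins s Q 0 2 0) :=
  boundL_general s P Q hQ hPtypes hQtypes hBLthorough
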